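/- Let L ≥ 2 be even, x₀ = L/2, B > 0 and v > 0. For t ∈ [0,1/v] let H(t) = H_0 − (1−vt)B S¹_{x₀} − vt B S¹_{x₀+1}, and let E₀(t) denote the lowest eigenvalue of H(t). Then E₀ attains its maximum over [0, 1/v] at the half period: E₀(1/(2v)) = max_{t ∈ [0,1/v]} E₀(t). -/

import Mathlib

open Matrix Finset
open scoped ComplexOrder

noncomputable section

/-- Configuration space of a chain of `L` spins-1/2: `ℋ_L = ⊗_{x=1}^L ℂ²`
is identified with functions `Conf L → ℂ`. -/
abbrev Conf (L : ℕ) := Fin L → Fin 2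

def S1 : Matrix (Fin 2) (Fin 2) ℂ := !![0, 1/2; 1/2, 0]
def S2 : Matrix (Fin 2) (Fin 2) ℂ := !![0, -Complex.I/2; Complex.I/2, 0]
def S3 : Matrix (Fin 2) (Fin 2) ℂ := !![1/2, 0; 0, -1/2]

/-- The one-site operator `A` acting on the `x`-th (0-based) tensor factor of `ℋ_L`. -/
def siteOp (L : ℕ) (A : Matrix (Fin 2) (Fin 2) ℂ) (x : ℕ) :
    Matrix (Conf L) (Conf L) ℂ :=
  fun m n =>
    if hx : x < L then
      A (m ⟨x, hx⟩) (n ⟨x, hx⟩) *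
        ∏ y ∈ Finset.univ.erase (⟨x, hx⟩ : Fin L), (if m y = n y then 1 else 0)
    else 0

def q (Δ : ℝ) : ℝ := Δ - Real.sqrt (Δ ^ 2 - 1)

/-- The bond interaction `h_{x,x+1}` (with `x` 0-based). -/
def hBond (L : ℕ) (Δ : ℝ) (x : ℕ) : Matrix (Conf L) (Conf L) ℂ :=
  (-(Δ⁻¹ : ℝ) : ℂ) • (siteOp L S1 x * siteOp L S1 (x + 1) + siteOp L S2 x * siteOp L S2 (x + 1))
    - siteOp L S3 x * siteOp L S3 (x + 1)
    + ((1 / 2 * Real.sqrt (1 - Δ⁻¹ ^ 2) : ℝ) : ℂ) • (siteOp L S3 x - siteOp L S3 (x + 1))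
    + ((1 / 4 : ℝ) : ℂ) • 1

/-- The XXZ kink Hamiltonian `H_0 = ∑_{x=1}^{L-1} h_{x,x+1}`. -/
def H0 (L : ℕ) (Δ : ℝ) : Matrix (Conf L) (Conf L) ℂ :=
  ∑ x ∈ Finset.range (L - 1), hBond L Δ x

/-- The kink state `φ_c` (0-based site `x` corresponds to the paper's site `x+1`). -/
def kink (L : ℕ) (Δ : ℝ) (c : ℂ) : Conf L → ℂ :=
  fun m => ∏ x : Fin L,
    (((1 + ‖c‖ ^ 2 * q Δ ^ (2 * (x.1 + 1))) ^ (-(1 / 2 : ℝ)) : ℝ) : ℂ) *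
      (if m x = 0 then 1 else c * (q Δ : ℂ) ^ (x.1 + 1))

/-- The set of (real) eigenvalues of a matrix. -/
def eigSet {n : Type*} [Fintype n] [DecidableEq n] (H : Matrix n n ℂ) : Set ℝ :=
  {μ : ℝ | ∃ ψ : n → ℂ, ψ ≠ 0 ∧ H.mulVec ψ = (μ : ℂ) • ψ}

/-- Euclidean norm of `𝐁(x) ∈ ℝ³`. -/
def bnorm (b : Fin 3 → ℝ) : ℝ := Real.sqrt (b 0 ^ 2 + b 1 ^ 2 + b 2 ^ 2)

/-- The magnetic field term `𝐁(x)·𝐒_x` at (0-based) site `x`. -/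
def fieldOp (L : ℕ) (b : Fin 3 → ℝ) (x : ℕ) : Matrix (Conf L) (Conf L) ℂ :=
  (b 0 : ℂ) • siteOp L S1 x + (b 1 : ℂ) • siteOp L S2 x + (b 2 : ℂ) • siteOp L S3 x

/-!
Reflecting the chain and flipping every spin maps the kink Hamiltonian `H_0` to itself (the flip
undoes the sign change that the reflection alone causes in the boundary fields), fixes `S¹`, and
exchanges the two driven sites `x₀` and `x₀ + 1`. Hence `H(t)` and `H(1/v - t)` are unitarily
equivalent and have the same ground energy `E₀(t)`. On the other hand
`H(t) + H(1/v - t) = 2 H(1/(2v))`, and testing both sides against a ground state of `H(1/(2v))`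
shows that the ground energy is midpoint concave in the Hamiltonian, so `E₀(t) ≤ E₀(1/(2v))`.
-/

section Spectral

variable {n : Type*}

lemma Matrix.IsHermitian.ofReal_smul {H : Matrix n n ℂ} (hH : H.IsHermitian) (r : ℝ) :
    ((r : ℂ) • H).IsHermitian :=
  hH.smul (Complex.conj_ofReal r)

variable [Fintype n] [DecidableEq n]

lemma Matrix.IsHermitian.eigenvalues_mem_eigSet {H : Matrix n n ℂ} (hH : H.IsHermitian)
    (i : n) : hH.eigenvalues i ∈ eigSet H := by
  refine ⟨⇑(hH.eigenvectorBasis i), fun h => hH.eigenvectorBasis.orthonormal.ne_zero i ?_, ?_⟩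
  · ext j
    simpa using congrFun h j
  · rw [hH.mulVec_eigenvectorBasis i]
    ext j
    simp [Complex.real_smul]

lemma add_mem_eigSet_of_mem_eigSet_sub {H : Matrix n n ℂ} {μ c : ℝ}
    (hμ : μ ∈ eigSet (H - (c : ℂ) • 1)) : μ + c ∈ eigSet H := by
  obtain ⟨ψ, hψ, hψμ⟩ := hμ
  refine ⟨ψ, hψ, ?_⟩
  rw [sub_mulVec, smul_mulVec, one_mulVec, sub_eq_iff_eq_add] at hψμ
  rw [hψμ, Complex.ofReal_add, add_smul]

lemma eigSet_reindex_subset {m : Type*} [Fintype m] [DecidableEq m] (e : n ≃ m)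
    (H : Matrix n n ℂ) : eigSet (reindex e e H) ⊆ eigSet H := by
  rintro μ ⟨ψ, hψ, hψμ⟩
  refine ⟨ψ ∘ e, fun h => hψ ?_, ?_⟩
  · ext j
    simpa using congrFun h (e.symm j)
  · ext j
    simpa [submatrix_mulVec_equiv] using congrFun hψμ (e j)

lemma eigSet_reindex {m : Type*} [Fintype m] [DecidableEq m] (e : n ≃ m) (H : Matrix n n ℂ) :
    eigSet (reindex e e H) = eigSet H := by
  refine (eigSet_reindex_subset e H).antisymm ?_
  simpa using eigSet_reindex_subset e.symm (reindex e e H)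

lemma posSemidef_sub_of_mem_lowerBounds {H : Matrix n n ℂ} (hH : H.IsHermitian) {E : ℝ}
    (hE : E ∈ lowerBounds (eigSet H)) : (H - (E : ℂ) • 1).PosSemidef := by
  have hH' : (H - (E : ℂ) • 1).IsHermitian :=
    hH.sub (isHermitian_one.ofReal_smul E)
  refine hH'.posSemidef_iff_eigenvalues_nonneg.mpr fun i => ?_
  exact le_add_iff_nonneg_left E |>.mp <|
    hE (add_mem_eigSet_of_mem_eigSet_sub (hH'.eigenvalues_mem_eigSet i))

lemma mul_dotProduct_le_of_mem_lowerBounds {H : Matrix n n ℂ} (hH : H.IsHermitian) {E : ℝ}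
    (hE : E ∈ lowerBounds (eigSet H)) (ψ : n → ℂ) :
    (E : ℂ) * (star ψ ⬝ᵥ ψ) ≤ star ψ ⬝ᵥ H *ᵥ ψ := by
  have := (posSemidef_sub_of_mem_lowerBounds hH hE).dotProduct_mulVec_nonneg ψ
  rwa [sub_mulVec, smul_mulVec, one_mulVec, dotProduct_sub, dotProduct_smul, smul_eq_mul,
    sub_nonneg] at this

lemma add_le_two_mul_of_add_eq_two_smul {H₁ H₂ M : Matrix n n ℂ} (h₁ : H₁.IsHermitian)
    (h₂ : H₂.IsHermitian) (hsum : H₁ + H₂ = (2 : ℂ) • M) {E₁ E₂ μ : ℝ}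
    (hE₁ : E₁ ∈ lowerBounds (eigSet H₁)) (hE₂ : E₂ ∈ lowerBounds (eigSet H₂))
    (hμ : μ ∈ eigSet M) : E₁ + E₂ ≤ 2 * μ := by
  obtain ⟨ψ, hψ, hψμ⟩ := hμ
  have hpos : 0 < star ψ ⬝ᵥ ψ := dotProduct_star_self_pos_iff.mpr hψ
  have key : ((E₁ + E₂ : ℝ) : ℂ) * (star ψ ⬝ᵥ ψ) ≤ ((2 * μ : ℝ) : ℂ) * (star ψ ⬝ᵥ ψ) := by
    calc ((E₁ + E₂ : ℝ) : ℂ) * (star ψ ⬝ᵥ ψ)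
        ≤ star ψ ⬝ᵥ H₁ *ᵥ ψ + star ψ ⬝ᵥ H₂ *ᵥ ψ := by
          push_cast
          rw [add_mul]
          exact add_le_add (mul_dotProduct_le_of_mem_lowerBounds h₁ hE₁ ψ)
            (mul_dotProduct_le_of_mem_lowerBounds h₂ hE₂ ψ)
      _ = ((2 * μ : ℝ) : ℂ) * (star ψ ⬝ᵥ ψ) := by
          rw [← dotProduct_add, ← add_mulVec, hsum, smul_mulVec, hψμ, smul_smul,
            dotProduct_smul, smul_eq_mul]
          push_cast
          ring
  exact_mod_cast le_of_mul_le_mul_right key hpos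

end Spectral

section SiteOperators

variable {L : ℕ}

lemma siteOp_apply (A : Matrix (Fin 2) (Fin 2) ℂ) (i : Fin L) (m n : Conf L) :
    siteOp L A i m n = A (m i) (n i) * if ∀ z ≠ i, m z = n z then 1 else 0 := by
  simp [siteOp, Finset.prod_boole]

lemma siteOp_of_le (A : Matrix (Fin 2) (Fin 2) ℂ) {x : ℕ} (hx : L ≤ x) :
    siteOp L A x = 0 := by
  ext m n
  simp [siteOp, hx.not_gt]

lemma siteOp_isHermitian {A : Matrix (Fin 2) (Fin 2) ℂ} (hA : A.IsHermitian) (x : ℕ) :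
    (siteOp L A x).IsHermitian := by
  rcases lt_or_ge x L with hx | hx
  · obtain ⟨i, rfl⟩ : ∃ i : Fin L, (i : ℕ) = x := ⟨⟨x, hx⟩, rfl⟩
    ext m n
    rw [conjTranspose_apply, siteOp_apply, siteOp_apply, star_mul', ← conjTranspose_apply,
      hA]
    simp [apply_ite (star : ℂ → ℂ), eq_comm]
  · simp [siteOp_of_le A hx]

lemma siteOp_mul_siteOp_apply (A B : Matrix (Fin 2) (Fin 2) ℂ) {i j : Fin L} (hij : i ≠ j)
    (m n : Conf L) :
    (siteOp L A i * siteOp L B j) m n =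
      A (m i) (n i) * B (m j) (n j) * if ∀ z, z ≠ i → z ≠ j → m z = n z then 1 else 0 := by
  rw [mul_apply, Finset.sum_eq_single (Function.update m i (n i))]
  · simp only [siteOp_apply, Function.update_self, Function.update_of_ne hij.symm]
    have hm : ∀ z ≠ i, m z = Function.update m i (n i) z :=
      fun z hz => (Function.update_of_ne hz _ _).symm
    have hn : (∀ z ≠ j, Function.update m i (n i) z = n z) ↔
        ∀ z, z ≠ i → z ≠ j → m z = n z := by
      refine ⟨fun h z hzi hzj => ?_, fun h z hzj => ?_⟩
      · simpa [Function.update_of_ne hzi] using h z hzj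
      · by_cases hzi : z = i
        · simp [hzi]
        · rw [Function.update_of_ne hzi]
          exact h z hzi hzj
    rw [if_pos hm, if_congr hn rfl rfl]
    ring
  · intro k _ hk
    rw [siteOp_apply, siteOp_apply]
    split_ifs with hmk hkn
    · refine absurd (funext fun z => ?_) hk
      by_cases hz : z = i
      · subst hz
        simpa using hkn z hij
      · simpa [hz] using (hmk z hz).symm
    all_goals simp
  · simp

lemma siteOp_mul_comm (A B : Matrix (Fin 2) (Fin 2) ℂ) {x y : ℕ} (hxy : x ≠ y) :
    siteOp L A x * siteOp L B y = siteOp L B y * siteOp L A x := by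
  rcases lt_or_ge x L with hx | hx
  · rcases lt_or_ge y L with hy | hy
    · obtain ⟨i, rfl⟩ : ∃ i : Fin L, (i : ℕ) = x := ⟨⟨x, hx⟩, rfl⟩
      obtain ⟨j, rfl⟩ : ∃ j : Fin L, (j : ℕ) = y := ⟨⟨y, hy⟩, rfl⟩
      have hij : i ≠ j := fun h => hxy (congrArg _ h)
      ext m n
      simp only [siteOp_mul_siteOp_apply _ _ hij, siteOp_mul_siteOp_apply _ _ hij.symm]
      simp only [← and_imp, and_comm]
      ring
    · simp [siteOp_of_le B hy]
  · simp [siteOp_of_le A hx]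

end SiteOperators

section Reflection

variable {L : ℕ}

def reflectFlip (L : ℕ) : Conf L ≃ Conf L := Fin.revPerm.arrowCongr Fin.revPerm

lemma reindex_reflectFlip_siteOp_fin (A : Matrix (Fin 2) (Fin 2) ℂ) (i : Fin L) :
    reindexAlgEquiv ℂ ℂ (reflectFlip L) (siteOp L A i) =
      siteOp L (A.submatrix Fin.rev Fin.rev) i.rev := by
  ext m n
  rw [coe_reindexAlgEquiv, reindex_apply, submatrix_apply, siteOp_apply, siteOp_apply]
  have hagree :
      (∀ z : Fin L, z ≠ i → m z.rev = n z.rev) ↔ ∀ z, z ≠ i.rev → m z = n z :=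
    Fin.revPerm.forall_congr fun z => by simp [Fin.rev_eq_iff]
  simp [reflectFlip, hagree]

lemma reindex_reflectFlip_siteOp (A : Matrix (Fin 2) (Fin 2) ℂ) {x : ℕ} (hx : x < L) :
    reindexAlgEquiv ℂ ℂ (reflectFlip L) (siteOp L A x) =
      siteOp L (A.submatrix Fin.rev Fin.rev) (L - 1 - x) := by
  have := reindex_reflectFlip_siteOp_fin A ⟨x, hx⟩
  rwa [Fin.val_rev, show L - (x + 1) = L - 1 - x by omega] at this

lemma siteOp_neg (A : Matrix (Fin 2) (Fin 2) ℂ) (x : ℕ) : siteOp L (-A) x = -siteOp L A x := by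
  ext m n
  rw [neg_apply]
  simp only [siteOp]
  split_ifs <;> simp

lemma S1_submatrix_rev : S1.submatrix Fin.rev Fin.rev = S1 := by
  ext i j
  fin_cases i <;> fin_cases j <;> simp [S1]

lemma S2_submatrix_rev : S2.submatrix Fin.rev Fin.rev = -S2 := by
  ext i j
  fin_cases i <;> fin_cases j <;> simp [S2] <;> ring

lemma S3_submatrix_rev : S3.submatrix Fin.rev Fin.rev = -S3 := by
  ext i j
  fin_cases i <;> fin_cases j <;> simp [S3] <;> ring

end Reflection

section Hamiltonian

variable {L : ℕ}

lemma S1_isHermitian : S1.IsHermitian := by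
  ext i j
  fin_cases i <;> fin_cases j <;> simp [S1]

lemma S2_isHermitian : S2.IsHermitian := by
  ext i j
  fin_cases i <;> fin_cases j <;> simp [S2]

lemma S3_isHermitian : S3.IsHermitian := by
  ext i j
  fin_cases i <;> fin_cases j <;> simp [S3]

lemma siteOp_mul_siteOp_isHermitian {A B : Matrix (Fin 2) (Fin 2) ℂ} (hA : A.IsHermitian)
    (hB : B.IsHermitian) {x y : ℕ} (hxy : x ≠ y) :
    (siteOp L A x * siteOp L B y).IsHermitian := by
  rw [IsHermitian, conjTranspose_mul, (siteOp_isHermitian hA x).eq, (siteOp_isHermitian hB y).eq,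
    siteOp_mul_comm _ _ hxy.symm]

lemma hBond_isHermitian (Δ : ℝ) (x : ℕ) : (hBond L Δ x).IsHermitian := by
  have hx : x ≠ x + 1 := x.succ_ne_self.symm
  have h₁ := siteOp_mul_siteOp_isHermitian (L := L) S1_isHermitian S1_isHermitian hx
  have h₂ := siteOp_mul_siteOp_isHermitian (L := L) S2_isHermitian S2_isHermitian hx
  have h₃ := siteOp_mul_siteOp_isHermitian (L := L) S3_isHermitian S3_isHermitian hx
  have h₃' := (siteOp_isHermitian (L := L) S3_isHermitian x).sub
    (siteOp_isHermitian S3_isHermitian (x + 1))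
  rw [hBond, neg_smul]
  exact (((((h₁.add h₂).ofReal_smul _).neg).sub h₃).add (h₃'.ofReal_smul _)).add
    (isHermitian_one.ofReal_smul _)

lemma H0_isHermitian (Δ : ℝ) : (H0 L Δ).IsHermitian := by
  rw [H0, IsHermitian, conjTranspose_sum]
  exact Finset.sum_congr rfl fun x _ => hBond_isHermitian Δ x

lemma reindex_reflectFlip_hBond (Δ : ℝ) {x : ℕ} (hx : x + 1 < L) :
    reindexAlgEquiv ℂ ℂ (reflectFlip L) (hBond L Δ x) = hBond L Δ (L - 2 - x) := by
  have e₁ : L - 1 - x = L - 2 - x + 1 := by omega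
  have e₂ : L - 1 - (x + 1) = L - 2 - x := by omega
  have hne : L - 2 - x + 1 ≠ L - 2 - x := (L - 2 - x).succ_ne_self
  simp only [hBond, map_add, map_sub, map_smul, map_mul, map_one,
    reindex_reflectFlip_siteOp _ (x.lt_succ_self.trans hx), reindex_reflectFlip_siteOp _ hx,
    S1_submatrix_rev, S2_submatrix_rev, S3_submatrix_rev, siteOp_neg, e₁, e₂, neg_mul_neg,
    siteOp_mul_comm _ _ hne, neg_sub_neg]

lemma reindex_reflectFlip_H0 (Δ : ℝ) :
    reindexAlgEquiv ℂ ℂ (reflectFlip L) (H0 L Δ) = H0 L Δ := by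
  rw [H0, map_sum, Finset.sum_congr rfl fun x hx =>
    reindex_reflectFlip_hBond Δ (by rw [Finset.mem_range] at hx; omega)]
  exact Finset.sum_range_reflect (hBond L Δ) (L - 1)

end Hamiltonian

section TransverseFields

variable {L : ℕ}

def H0WithFields (L : ℕ) (Δ : ℝ) (x y : ℕ) (a b : ℝ) : Matrix (Conf L) (Conf L) ℂ :=
  H0 L Δ - (a : ℂ) • siteOp L S1 x - (b : ℂ) • siteOp L S1 y

variable (Δ : ℝ) {x y : ℕ} (a b : ℝ)

lemma H0WithFields_isHermitian : (H0WithFields L Δ x y a b).IsHermitian :=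
  ((H0_isHermitian Δ).sub ((siteOp_isHermitian S1_isHermitian x).ofReal_smul a)).sub
    ((siteOp_isHermitian S1_isHermitian y).ofReal_smul b)

lemma H0WithFields_add_swap :
    H0WithFields L Δ x y a b + H0WithFields L Δ x y b a =
      (2 : ℂ) • H0WithFields L Δ x y ((a + b) / 2) ((a + b) / 2) := by
  simp only [H0WithFields]
  push_cast
  module

lemma reindex_reflectFlip_H0WithFields (hxy : x + y + 1 = L) :
    reindexAlgEquiv ℂ ℂ (reflectFlip L) (H0WithFields L Δ x y a b) =
      H0WithFields L Δ x y b a := by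
  simp only [H0WithFields, map_sub, map_smul, reindex_reflectFlip_H0,
    reindex_reflectFlip_siteOp _ (by omega : x < L),
    reindex_reflectFlip_siteOp _ (by omega : y < L), S1_submatrix_rev, show L - 1 - x = y by omega, show L - 1 - y = x by omega]
  exact sub_right_comm _ _ _

lemma eigSet_H0WithFields_swap (hxy : x + y + 1 = L) :
    eigSet (H0WithFields L Δ x y b a) = eigSet (H0WithFields L Δ x y a b) := by
  rw [← reindex_reflectFlip_H0WithFields Δ a b hxy, coe_reindexAlgEquiv, eigSet_reindex]

end TransverseFields

theorem ground_energy_max_at_half_period_general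
    (L : ℕ) (hL : 2 ≤ L) (hLeven : Even L) (Δ : ℝ)
    (B v : ℝ) (hv : 0 < v)
    (E₀ : ℝ → ℝ)
    (hE₀ : ∀ t ∈ Set.Icc (0 : ℝ) (1 / v),
      IsLeast (eigSet (H0 L Δ
        - (((1 - v * t) * B : ℝ) : ℂ) • siteOp L S1 (L / 2 - 1)
        - ((v * t * B : ℝ) : ℂ) • siteOp L S1 (L / 2))) (E₀ t)) :
    IsMaxOn E₀ (Set.Icc 0 (1 / v)) (1 / (2 * v)) := by
  have hsites : L / 2 - 1 + L / 2 + 1 = L := by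
    obtain ⟨k, rfl⟩ := hLeven
    omega
  have hmid : 1 / (2 * v) ∈ Set.Icc 0 (1 / v) :=
    ⟨by positivity, (one_div_le_one_div (by positivity) hv).mpr (by linarith)⟩
  refine isMaxOn_iff.mpr fun t ht => ?_
  have hlow : E₀ t ∈ lowerBounds
      (eigSet (H0WithFields L Δ (L / 2 - 1) (L / 2) ((1 - v * t) * B) (v * t * B))) :=
    (hE₀ t ht).2
  have hlow_swap : E₀ t ∈ lowerBounds
      (eigSet (H0WithFields L Δ (L / 2 - 1) (L / 2) (v * t * B) ((1 - v * t) * B))) := by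
    rwa [eigSet_H0WithFields_swap Δ _ _ hsites]
  have hmidE : E₀ (1 / (2 * v)) ∈
      eigSet (H0WithFields L Δ (L / 2 - 1) (L / 2) (B / 2) (B / 2)) := by
    have hcoef₁ : (1 - v * (1 / (2 * v))) * B = B / 2 := by field_simp; ring
    have hcoef₂ : v * (1 / (2 * v)) * B = B / 2 := by field_simp
    have hground := (hE₀ _ hmid).1
    rw [hcoef₁, hcoef₂] at hground
    exact hground
  have hsum := H0WithFields_add_swap (L := L) Δ (x := L / 2 - 1) (y := L / 2)
    ((1 - v * t) * B) (v * t * B)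
  rw [show ((1 - v * t) * B + v * t * B) / 2 = B / 2 by ring] at hsum
  linarith [add_le_two_mul_of_add_eq_two_smul (H0WithFields_isHermitian Δ _ _)
    (H0WithFields_isHermitian Δ _ _) hsum hlow hlow_swap hmidE]

/-- for even `L`, `x₀ = L/2`, and
`H(t) = H_0 − (1−vt)B S¹_{x₀} − vt B S¹_{x₀+1}` (0-based site indices `L/2 - 1, L/2`),
the lowest eigenvalue `E₀` attains its maximum over `[0, 1/v]` at the half period
`t = 1/(2v)`. -/
theorem ground_energy_max_at_half_period
    (L : ℕ) (hL : 2 ≤ L) (hLeven : Even L) (Δ : ℝ) (hΔ : 1 < Δ)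
    (B v : ℝ) (hB : 0 < B) (hv : 0 < v)
    (E₀ : ℝ → ℝ)
    (hE₀ : ∀ t ∈ Set.Icc (0 : ℝ) (1 / v),
      IsLeast (eigSet (H0 L Δ
        - (((1 - v * t) * B : ℝ) : ℂ) • siteOp L S1 (L / 2 - 1)
        - ((v * t * B : ℝ) : ℂ) • siteOp L S1 (L / 2))) (E₀ t)) :
    IsMaxOn E₀ (Set.Icc 0 (1 / v)) (1 / (2 * v)) :=
  ground_energy_max_at_half_period_general L hL hLeven Δ B v hv E₀ hE₀
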